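/- One-shot multiple description achievability (Zhang–Berger form): Let q_S be a source pmf on a finite set 𝒮, let d_k : 𝒮 × Ŝ_k → [0,∞) for k = 0,1,2 be distortion measures with levels D₀, D₁, D₂ ≥ 0. For any conditional pmf q_{U₀U₁U₂|S} to finite sets, any reconstruction functions ŝ₀ : 𝒰₀×𝒰₁×𝒰₂ → Ŝ₀, ŝ₁ : 𝒰₀×𝒰₁ → Ŝ₁, ŝ₂ : 𝒰₀×𝒰₂ → Ŝ₂, positive integers M₁, M₂, and any positive integer J₀ that divides both M₁ and M₂, define q(s,u₀,u₁,u₂) = q(s)·q(u₀,u₁,u₂|s). Then there exists an (M₁,M₂)-code whose probability of no-excess distortion satisfies P[ d₀(S,Ŝ₀) ≤ D₀, d₁(S,Ŝ₁) ≤ D₁, d₂(S,Ŝ₂) ≤ D₂ ] ≥ E_q [ 1{ d₀(S, ŝ₀(U₀,U₁,U₂)) ≤ D₀, d₁(S, ŝ₁(U₀,U₁)) ≤ D₁, d₂(S, ŝ₂(U₀,U₂)) ≤ D₂ } / ( 1 + J₀^{−1}·2^{i_q(S;U₀)} + M₁^{−1}·2^{i_q(S;U₀U₁)} + M₂^{−1}·2^{i_q(S;U₀U₂)}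 + J₀(M₁M₂)^{−1}·2^{i_q(S;U₀U₁U₂) + i_q(U₁;U₂|U₀)} ) ]. -/

import Mathlib

open scoped BigOperators

/-- A pmf on a finite type, represented by a nonnegative real-valued function summing to 1. -/
structure FinPMF (α : Type) [Fintype α] where
  p : α → ℝ
  nonneg : ∀ a, 0 ≤ p a
  sum_eq_one : ∑ a, p a = 1

open Classical in
/-- Indicator of a proposition, as a real number. -/
noncomputable def ind (P : Prop) : ℝ := if P then 1 else 0

variable {S U0 U1 U2 R0 R1 R2 : Type}
  [Fintype S] [Fintype U0] [Fintype U1] [Fintype U2]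
  [Fintype R0] [Fintype R1] [Fintype R2]

/-- The joint pmf `q(s,u₀,u₁,u₂) = q(s) q(u₀,u₁,u₂|s)`. -/
noncomputable def qMD (qS : FinPMF S) (qU : S → FinPMF (U0 × U1 × U2))
    (s : S) (u0 : U0) (u1 : U1) (u2 : U2) : ℝ :=
  qS.p s * (qU s).p (u0, u1, u2)

noncomputable def mSU0 (qS : FinPMF S) (qU : S → FinPMF (U0 × U1 × U2))
    (s : S) (u0 : U0) : ℝ :=
  ∑ u1 : U1, ∑ u2 : U2, qMD qS qU s u0 u1 u2

noncomputable def mU0 (qS : FinPMF S) (qU : S → FinPMF (U0 × U1 × U2)) (u0 : U0) : ℝ :=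
  ∑ s : S, mSU0 qS qU s u0

noncomputable def mSU01 (qS : FinPMF S) (qU : S → FinPMF (U0 × U1 × U2))
    (s : S) (u0 : U0) (u1 : U1) : ℝ :=
  ∑ u2 : U2, qMD qS qU s u0 u1 u2

noncomputable def mU01 (qS : FinPMF S) (qU : S → FinPMF (U0 × U1 × U2))
    (u0 : U0) (u1 : U1) : ℝ :=
  ∑ s : S, mSU01 qS qU s u0 u1

noncomputable def mSU02 (qS : FinPMF S) (qU : S → FinPMF (U0 × U1 × U2))
    (s : S) (u0 : U0) (u2 : U2) : ℝ :=
  ∑ u1 : U1, qMD qS qU s u0 u1 u2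

noncomputable def mU02 (qS : FinPMF S) (qU : S → FinPMF (U0 × U1 × U2))
    (u0 : U0) (u2 : U2) : ℝ :=
  ∑ s : S, mSU02 qS qU s u0 u2

noncomputable def mU012 (qS : FinPMF S) (qU : S → FinPMF (U0 × U1 × U2))
    (u0 : U0) (u1 : U1) (u2 : U2) : ℝ :=
  ∑ s : S, qMD qS qU s u0 u1 u2

/-- Information density `i_q(S;U₀)`. -/
noncomputable def iSU0 (qS : FinPMF S) (qU : S → FinPMF (U0 × U1 × U2))
    (s : S) (u0 : U0) : ℝ :=
  Real.logb 2 (mSU0 qS qU s u0 / (qS.p s * mU0 qS qU u0))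

/-- Information density `i_q(S;U₀U₁)`, treating `(U₀,U₁)` as a single variable. -/
noncomputable def iSU01 (qS : FinPMF S) (qU : S → FinPMF (U0 × U1 × U2))
    (s : S) (u0 : U0) (u1 : U1) : ℝ :=
  Real.logb 2 (mSU01 qS qU s u0 u1 / (qS.p s * mU01 qS qU u0 u1))

/-- Information density `i_q(S;U₀U₂)`, treating `(U₀,U₂)` as a single variable. -/
noncomputable def iSU02 (qS : FinPMF S) (qU : S → FinPMF (U0 × U1 × U2))
    (s : S) (u0 : U0) (u2 : U2) : ℝ :=
  Real.logb 2 (mSU02 qS qU s u0 u2 / (qS.p s * mU02 qS qU u0 u2))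

/-- Information density `i_q(S;U₀U₁U₂)`, treating `(U₀,U₁,U₂)` as a single variable. -/
noncomputable def iSU012 (qS : FinPMF S) (qU : S → FinPMF (U0 × U1 × U2))
    (s : S) (u0 : U0) (u1 : U1) (u2 : U2) : ℝ :=
  Real.logb 2 (qMD qS qU s u0 u1 u2 / (qS.p s * mU012 qS qU u0 u1 u2))

/-- Conditional information density `i_q(U₁;U₂|U₀)`. -/
noncomputable def iU1U2cU0 (qS : FinPMF S) (qU : S → FinPMF (U0 × U1 × U2))
    (u0 : U0) (u1 : U1) (u2 : U2) : ℝ :=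
  Real.logb 2 (mU012 qS qU u0 u1 u2 * mU0 qS qU u0 /
    (mU01 qS qU u0 u1 * mU02 qS qU u0 u2))

/-- Probability of no-excess distortion of an `(M₁,M₂)`-code for multiple description
coding: `(M₁,M₂) = φ(S)`, `Ŝ₀ = ψ₀(M₁,M₂)`, `Ŝ₁ = ψ₁(M₁)`, `Ŝ₂ = ψ₂(M₂)`. -/
noncomputable def pNoExcessMD (M1 M2 : ℕ) (qS : FinPMF S)
    (d0 : S → R0 → ℝ) (d1 : S → R1 → ℝ) (d2 : S → R2 → ℝ) (D0 D1 D2 : ℝ)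
    (enc : S → FinPMF (Fin M1 × Fin M2)) (dec0 : Fin M1 × Fin M2 → FinPMF R0)
    (dec1 : Fin M1 → FinPMF R1) (dec2 : Fin M2 → FinPMF R2) : ℝ :=
  ∑ s : S, ∑ m : Fin M1 × Fin M2, ∑ r0 : R0, ∑ r1 : R1, ∑ r2 : R2,
    qS.p s * (enc s).p m * (dec0 m).p r0 * (dec1 m.1).p r1 * (dec2 m.2).p r2 *
      ind (d0 s r0 ≤ D0 ∧ d1 s r1 ≤ D1 ∧ d2 s r2 ≤ D2)

/-!
Random coding with a likelihood encoder. A codebook consists of `J₀` independent blocks; a block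
holds `u₀ ∼ q(u₀)` together with `L₁` candidates `u₁ ∼ q(u₁|u₀)` and `L₂` candidates
`u₂ ∼ q(u₂|u₀)`, all conditionally independent given `u₀`. Given `s`, the encoder picks the
codeword `t` with probability `w_t / W`, where `w_t` is the likelihood ratio of `q(u|s)` against
the codeword law at `C_t` and `W = ∑ w_{t'}`. The tangent-line bound `1/W ≥ (2K - W)/K²` turns
the expected success probability into first and second moments of the weights. Conditionally on
`C_t = u`, a codeword `t'` of another block contributes `1` to `E[W]`, and one of the same block
at most `2^{i(S;U₀)}`, `2^{i(S;U₀U₁)}`, `2^{i(S;U₀U₂)}` or `2^{i(S;U₀U₁U₂) + i(U₁;U₂|U₀)}`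
according to whether it shares with `t` only `u₀`, also `u₁`, also `u₂`, or everything. Hence
`E[W | C_t = u] ≤ K(u)`, which is `J₀L₁L₂` times the denominator of the claimed bound when
`M₁ = J₀L₁` and `M₂ = J₀L₂`. Some codebook does at least as well as the average.
-/

namespace Fintype

variable {ι α R : Type*} [Fintype ι] [DecidableEq ι] [Fintype α] [CommSemiring R]

theorem sum_pi_prod_eq_one {h : α → R} (hh : ∑ a, h a = 1) :
    ∑ f : ι → α, ∏ i, h (f i) = 1 := by
  rw [← Fintype.prod_sum fun _ => h]
  simp [hh]

theorem sum_pi_prod_mul_apply_mul_apply {h : α → R} (hh : ∑ a, h a = 1) (l l' : ι)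
    (Φ Ψ : α → R) :
    ∑ f : ι → α, (∏ i, h (f i)) * (Φ (f l) * Ψ (f l')) =
      ∑ a, h a * Φ a * if l' = l then Ψ a else ∑ b, h b * Ψ b := by
  have factor : ∀ f : ι → α, (∏ i, h (f i)) * (Φ (f l) * Ψ (f l')) =
      ∏ i, h (f i) * ((if i = l then Φ (f i) else 1) * if i = l' then Ψ (f i) else 1) := by
    intro f
    rw [Finset.prod_mul_distrib, Finset.prod_mul_distrib, Finset.prod_ite_eq',
      Finset.prod_ite_eq']
    simp
  simp_rw [factor]
  rw [← Fintype.prod_sum fun i a => h a * ((if i = l then Φ a else 1) * if i = l' then Ψ a else 1)]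
  split_ifs with hl
  · subst hl
    rw [Finset.prod_eq_single l' fun i _ hi => by simp [hi, hh]] <;> simp [mul_assoc]
  · rw [Finset.prod_eq_mul l l' (Ne.symm hl) (fun i _ hi => by simp [hi.1, hi.2, hh])]
    · simp only [hl, Ne.symm hl, if_true, if_false, mul_one, one_mul, Finset.mul_sum,
        Finset.sum_mul]
      rw [Finset.sum_comm]
    all_goals simp

end Fintype

theorem exists_le_of_le_sum_mul {ι : Type*} [Fintype ι] {μ f : ι → ℝ} {r : ℝ}
    (hμ : ∀ i, 0 ≤ μ i) (hμ1 : ∑ i, μ i = 1) (h : r ≤ ∑ i, μ i * f i) : ∃ i, r ≤ f i := by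
  by_contra! hlt
  obtain ⟨i, -, hi⟩ := Finset.exists_ne_zero_of_sum_ne_zero (hμ1 ▸ one_ne_zero : ∑ i, μ i ≠ 0)
  have : ∑ i, μ i * f i < ∑ i, μ i * r :=
    Finset.sum_lt_sum (fun j _ => mul_le_mul_of_nonneg_left (hlt j).le (hμ j))
      ⟨i, Finset.mem_univ _, mul_lt_mul_of_pos_left (hlt i) ((hμ i).lt_of_ne' hi)⟩
  rw [← Finset.sum_mul, hμ1, one_mul] at this
  linarith

theorem Real.le_rpow_logb {b x : ℝ} (hb : 0 < b) (hb1 : b ≠ 1) (hx : 0 ≤ x) :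
    x ≤ b ^ Real.logb b x := by
  rcases hx.eq_or_lt with rfl | hx
  · exact Real.rpow_nonneg hb.le _
  · rw [Real.rpow_logb hb hb1 hx]

theorem ind_nonneg (P : Prop) : 0 ≤ ind P := by
  unfold ind
  split_ifs <;> norm_num

namespace FinPMF

variable {α β : Type} [Fintype α] [Fintype β]

def dirac [DecidableEq α] (a : α) : FinPMF α where
  p b := if b = a then 1 else 0
  nonneg b := by split_ifs <;> norm_num
  sum_eq_one := by simp

noncomputable def map [DecidableEq β] (f : α → β) (q : FinPMF α) : FinPMF β where
  p b := ∑ a, if f a = b then q.p a else 0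
  nonneg b := Finset.sum_nonneg fun a _ => by split_ifs; exacts [q.nonneg a, le_rfl]
  sum_eq_one := by rw [Finset.sum_comm]; simp [q.sum_eq_one]

theorem sum_map_mul [DecidableEq β] (f : α → β) (q : FinPMF α) (F : β → ℝ) :
    ∑ b, (q.map f).p b * F b = ∑ a, q.p a * F (f a) := by
  simp only [map, Finset.sum_mul, ite_mul, zero_mul]
  rw [Finset.sum_comm]
  simp

noncomputable def normalize [Nonempty α] (w : α → ℝ) (hw : ∀ a, 0 ≤ w a) : FinPMF α where
  p a := if ∑ b, w b = 0 then (Fintype.card α : ℝ)⁻¹ else w a / ∑ b, w b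
  nonneg a := by
    split_ifs
    · positivity
    · exact div_nonneg (hw a) (Finset.sum_nonneg fun b _ => hw b)
  sum_eq_one := by
    split_ifs with h
    · simp [Finset.card_univ]
    · rw [← Finset.sum_div, div_self h]

theorem mul_two_mul_sub_div_sq_le_normalize [Nonempty α] {w : α → ℝ} (hw : ∀ a, 0 ≤ w a)
    {K : ℝ} (hK : 0 < K) (a : α) :
    w a * (2 * K - ∑ b, w b) / K ^ 2 ≤ (normalize w hw).p a := by
  have hW : 0 ≤ ∑ b, w b := Finset.sum_nonneg fun b _ => hw b
  simp only [normalize]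
  split_ifs with h
  · rw [(Finset.sum_eq_zero_iff_of_nonneg fun b _ => hw b).mp h a (Finset.mem_univ a)]
    simp
  · have hW : 0 < ∑ b, w b := hW.lt_of_ne' h
    rw [div_le_div_iff₀ (by positivity) hW]
    -- tangent line of `x ↦ 1/x` at `K`
    nlinarith [mul_nonneg (hw a) (sq_nonneg (K - ∑ b, w b))]

end FinPMF

theorem pNoExcessMD_map_dirac {T : Type} [Fintype T] [DecidableEq R0] [DecidableEq R1]
    [DecidableEq R2] (M1 M2 : ℕ) (qS : FinPMF S)
    (d0 : S → R0 → ℝ) (d1 : S → R1 → ℝ) (d2 : S → R2 → ℝ) (D0 D1 D2 : ℝ)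
    (enc : S → FinPMF T) (ι : T → Fin M1 × Fin M2) (v0 : Fin M1 × Fin M2 → R0)
    (v1 : Fin M1 → R1) (v2 : Fin M2 → R2) :
    pNoExcessMD M1 M2 qS d0 d1 d2 D0 D1 D2 (fun s => (enc s).map ι)
        (fun m => .dirac (v0 m)) (fun m1 => .dirac (v1 m1)) (fun m2 => .dirac (v2 m2)) =
      ∑ s, ∑ t, qS.p s * (enc s).p t *
        ind (d0 s (v0 (ι t)) ≤ D0 ∧ d1 s (v1 (ι t).1) ≤ D1 ∧ d2 s (v2 (ι t).2) ≤ D2) := by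
  refine Finset.sum_congr rfl fun s _ => ?_
  simp only [FinPMF.dirac, mul_ite, ite_mul, mul_one, mul_zero, zero_mul, Finset.sum_ite_eq',
    Finset.mem_univ, if_true]
  simp only [mul_comm (qS.p s), mul_assoc]
  exact FinPMF.sum_map_mul ι (enc s) _

section Marginals

variable (qS : FinPMF S) (qU : S → FinPMF (U0 × U1 × U2))

theorem qMD_nonneg (s : S) (u0 : U0) (u1 : U1) (u2 : U2) : 0 ≤ qMD qS qU s u0 u1 u2 :=
  mul_nonneg (qS.nonneg s) ((qU s).nonneg _)

theorem mU0_nonneg (u0 : U0) : 0 ≤ mU0 qS qU u0 :=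
  Finset.sum_nonneg fun _ _ => Finset.sum_nonneg fun _ _ => Finset.sum_nonneg fun _ _ =>
    qMD_nonneg qS qU _ _ _ _

theorem mU01_nonneg (u0 : U0) (u1 : U1) : 0 ≤ mU01 qS qU u0 u1 :=
  Finset.sum_nonneg fun _ _ => Finset.sum_nonneg fun _ _ => qMD_nonneg qS qU _ _ _ _

theorem mU02_nonneg (u0 : U0) (u2 : U2) : 0 ≤ mU02 qS qU u0 u2 :=
  Finset.sum_nonneg fun _ _ => Finset.sum_nonneg fun _ _ => qMD_nonneg qS qU _ _ _ _

theorem sum_mU0 : ∑ u0, mU0 qS qU u0 = 1 := by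
  have hqU : ∀ s, ∑ u0, ∑ u1, ∑ u2, (qU s).p (u0, u1, u2) = 1 := fun s => by
    simpa only [Fintype.sum_prod_type] using (qU s).sum_eq_one
  simp only [mU0, mSU0, qMD, ← Finset.mul_sum]
  rw [Finset.sum_comm]
  simp only [← Finset.mul_sum, hqU, mul_one, qS.sum_eq_one]

theorem sum_mU01 (u0 : U0) : ∑ u1, mU01 qS qU u0 u1 = mU0 qS qU u0 := by
  simp only [mU01, mU0, mSU0, mSU01]
  exact Finset.sum_comm

theorem sum_mU02 (u0 : U0) : ∑ u2, mU02 qS qU u0 u2 = mU0 qS qU u0 := by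
  simp only [mU02, mU0, mSU0, mSU02]
  rw [Finset.sum_comm]
  exact Finset.sum_congr rfl fun _ _ => Finset.sum_comm

theorem marginals_pos {s : S} (hs : 0 < qS.p s) {u0 : U0} {u1 : U1} {u2 : U2}
    (hu : (qU s).p (u0, u1, u2) ≠ 0) :
    0 < mU0 qS qU u0 ∧ 0 < mU01 qS qU u0 u1 ∧ 0 < mU02 qS qU u0 u2 ∧
      0 < mU012 qS qU u0 u1 u2 := by
  have hq : 0 < qMD qS qU s u0 u1 u2 := mul_pos hs (((qU s).nonneg _).lt_of_ne' hu)
  have pos : ∀ {ι : Type} [Fintype ι] {f : ι → ℝ} (i : ι), (∀ j, 0 ≤ f j) → 0 < f i →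
      0 < ∑ j, f j := fun i hf hi => Finset.sum_pos' (fun j _ => hf j) ⟨i, Finset.mem_univ _, hi⟩
  have hnn := qMD_nonneg qS qU
  refine ⟨pos s (fun _ => Finset.sum_nonneg fun _ _ => Finset.sum_nonneg fun _ _ => hnn ..)
      (pos u1 (fun _ => Finset.sum_nonneg fun _ _ => hnn ..) (pos u2 (hnn _ _ _) hq)),
    pos s (fun _ => Finset.sum_nonneg fun _ _ => hnn ..) (pos u2 (hnn _ _ _) hq),
    pos s (fun _ => Finset.sum_nonneg fun _ _ => hnn ..) (pos u1 (hnn _ _ · _) hq),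
    pos s (hnn · _ _ _) hq⟩

end Marginals

section CodewordLaw

variable (qS : FinPMF S) (qU : S → FinPMF (U0 × U1 × U2))

/-- `q(u₁|u₀)`; it is `0` where `q(u₀) = 0`, and is only used multiplied by `q(u₀)`. -/
noncomputable def cU1 (u0 : U0) (u1 : U1) : ℝ := mU01 qS qU u0 u1 / mU0 qS qU u0

noncomputable def cU2 (u0 : U0) (u2 : U2) : ℝ := mU02 qS qU u0 u2 / mU0 qS qU u0

/-- The law `q(u₀) q(u₁|u₀) q(u₂|u₀)` of a single codeword. -/
noncomputable def qIndep (u : U0 × U1 × U2) : ℝ :=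
  mU0 qS qU u.1 * cU1 qS qU u.1 u.2.1 * cU2 qS qU u.1 u.2.2

/-- The likelihood ratio `q(u|s) / qIndep u`. -/
noncomputable def likRatio (s : S) (u : U0 × U1 × U2) : ℝ :=
  (qU s).p u * mU0 qS qU u.1 / (mU01 qS qU u.1 u.2.1 * mU02 qS qU u.1 u.2.2)

theorem cU1_nonneg (u0 : U0) (u1 : U1) : 0 ≤ cU1 qS qU u0 u1 :=
  div_nonneg (mU01_nonneg qS qU u0 u1) (mU0_nonneg qS qU u0)

theorem cU2_nonneg (u0 : U0) (u2 : U2) : 0 ≤ cU2 qS qU u0 u2 :=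
  div_nonneg (mU02_nonneg qS qU u0 u2) (mU0_nonneg qS qU u0)

theorem sum_cU1 {u0 : U0} (h : mU0 qS qU u0 ≠ 0) : ∑ u1, cU1 qS qU u0 u1 = 1 := by
  simp only [cU1, ← Finset.sum_div, sum_mU01, div_self h]

theorem sum_cU2 {u0 : U0} (h : mU0 qS qU u0 ≠ 0) : ∑ u2, cU2 qS qU u0 u2 = 1 := by
  simp only [cU2, ← Finset.sum_div, sum_mU02, div_self h]

theorem qIndep_nonneg (u : U0 × U1 × U2) : 0 ≤ qIndep qS qU u :=
  mul_nonneg (mul_nonneg (mU0_nonneg qS qU _) (cU1_nonneg qS qU _ _)) (cU2_nonneg qS qU _ _)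

theorem likRatio_nonneg (s : S) (u : U0 × U1 × U2) : 0 ≤ likRatio qS qU s u :=
  div_nonneg (mul_nonneg ((qU s).nonneg u) (mU0_nonneg qS qU _))
    (mul_nonneg (mU01_nonneg qS qU _ _) (mU02_nonneg qS qU _ _))

variable {qS} {s : S} (hs : 0 < qS.p s)
include hs

theorem cU2_mul_likRatio (u0 : U0) (u1 : U1) (u2 : U2) :
    cU2 qS qU u0 u2 * likRatio qS qU s (u0, u1, u2) = (qU s).p (u0, u1, u2) / mU01 qS qU u0 u1 := by
  by_cases hu : (qU s).p (u0, u1, u2) = 0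
  · simp [likRatio, hu]
  obtain ⟨h0, h01, h02, -⟩ := marginals_pos qS qU hs hu
  simp only [cU2, likRatio]
  field_simp

theorem cU1_mul_likRatio (u0 : U0) (u1 : U1) (u2 : U2) :
    cU1 qS qU u0 u1 * likRatio qS qU s (u0, u1, u2) = (qU s).p (u0, u1, u2) / mU02 qS qU u0 u2 := by
  by_cases hu : (qU s).p (u0, u1, u2) = 0
  · simp [likRatio, hu]
  obtain ⟨h0, h01, h02, -⟩ := marginals_pos qS qU hs hu
  simp only [cU1, likRatio]
  field_simp

theorem cU1_mul_cU2_mul_likRatio (u0 : U0) (u1 : U1) (u2 : U2) :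
    cU1 qS qU u0 u1 * (cU2 qS qU u0 u2 * likRatio qS qU s (u0, u1, u2)) =
      (qU s).p (u0, u1, u2) / mU0 qS qU u0 := by
  by_cases hu : (qU s).p (u0, u1, u2) = 0
  · simp [likRatio, hu]
  obtain ⟨h0, h01, h02, -⟩ := marginals_pos qS qU hs hu
  simp only [cU1, cU2, likRatio]
  field_simp

theorem qIndep_mul_likRatio (u : U0 × U1 × U2) :
    qIndep qS qU u * likRatio qS qU s u = (qU s).p u := by
  by_cases hu : (qU s).p u = 0
  · simp [likRatio, hu]
  obtain ⟨h0, -⟩ := marginals_pos qS qU hs hu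
  rw [qIndep, mul_assoc, mul_assoc, cU1_mul_cU2_mul_likRatio qU hs, mul_div_cancel₀ _ h0.ne']

theorem sum_qIndep_mul_likRatio : ∑ u, qIndep qS qU u * likRatio qS qU s u = 1 := by
  simp only [qIndep_mul_likRatio qU hs, (qU s).sum_eq_one]

theorem likRatio_le (u0 : U0) (u1 : U1) (u2 : U2) :
    likRatio qS qU s (u0, u1, u2) ≤
      2 ^ (iSU012 qS qU s u0 u1 u2 + iU1U2cU0 qS qU u0 u1 u2) := by
  by_cases hu : (qU s).p (u0, u1, u2) = 0
  · simp only [likRatio, hu, zero_mul, zero_div]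
    positivity
  obtain ⟨h0, h01, h02, h012⟩ := marginals_pos qS qU hs hu
  have hu' := ((qU s).nonneg (u0, u1, u2)).lt_of_ne' hu
  rw [Real.rpow_add two_pos, iSU012, iU1U2cU0, qMD,
    Real.rpow_logb two_pos one_lt_two.ne' (by positivity),
    Real.rpow_logb two_pos one_lt_two.ne' (by positivity), likRatio]
  exact le_of_eq (by field_simp)

theorem sum_cU2_mul_likRatio_le (u0 : U0) (u1 : U1) :
    ∑ u2, cU2 qS qU u0 u2 * likRatio qS qU s (u0, u1, u2) ≤ 2 ^ iSU01 qS qU s u0 u1 :=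
  calc _ = mSU01 qS qU s u0 u1 / (qS.p s * mU01 qS qU u0 u1) := by
        simp only [cU2_mul_likRatio qU hs, ← Finset.sum_div, mSU01, qMD, ← Finset.mul_sum,
          mul_div_mul_left _ _ hs.ne']
    _ ≤ _ := Real.le_rpow_logb two_pos one_lt_two.ne' <| div_nonneg
        (Finset.sum_nonneg fun _ _ => qMD_nonneg qS qU ..)
        (mul_nonneg hs.le (mU01_nonneg qS qU u0 u1))

theorem sum_cU1_mul_likRatio_le (u0 : U0) (u2 : U2) :
    ∑ u1, cU1 qS qU u0 u1 * likRatio qS qU s (u0, u1, u2) ≤ 2 ^ iSU02 qS qU s u0 u2 :=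
  calc _ = mSU02 qS qU s u0 u2 / (qS.p s * mU02 qS qU u0 u2) := by
        simp only [cU1_mul_likRatio qU hs, ← Finset.sum_div, mSU02, qMD, ← Finset.mul_sum,
          mul_div_mul_left _ _ hs.ne']
    _ ≤ _ := Real.le_rpow_logb two_pos one_lt_two.ne' <| div_nonneg
        (Finset.sum_nonneg fun _ _ => qMD_nonneg qS qU ..)
        (mul_nonneg hs.le (mU02_nonneg qS qU u0 u2))

theorem sum_cU1_mul_sum_cU2_mul_likRatio_le (u0 : U0) :
    ∑ u1, cU1 qS qU u0 u1 * ∑ u2, cU2 qS qU u0 u2 * likRatio qS qU s (u0, u1, u2) ≤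
      2 ^ iSU0 qS qU s u0 :=
  calc _ = mSU0 qS qU s u0 / (qS.p s * mU0 qS qU u0) := by
        simp only [Finset.mul_sum, cU1_mul_cU2_mul_likRatio qU hs, ← Finset.sum_div]
        simp only [mSU0, qMD, ← Finset.mul_sum, mul_div_mul_left _ _ hs.ne']
    _ ≤ _ := Real.le_rpow_logb two_pos one_lt_two.ne' <| div_nonneg
        (Finset.sum_nonneg fun _ _ => Finset.sum_nonneg fun _ _ => qMD_nonneg qS qU ..)
        (mul_nonneg hs.le (mU0_nonneg qS qU u0))

end CodewordLaw

/-- Block `j` holds one `u₀` and the candidates `u₁`, `u₂`; the codeword `(j, l₁, l₂)` is sent as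
the message pair `((j, l₁), (j, l₂))`. -/
abbrev Codebook (U0 U1 U2 : Type) (n0 n1 n2 : ℕ) : Type :=
  Fin n0 → U0 × (Fin n1 → U1) × (Fin n2 → U2)

def Codebook.word {n0 n1 n2 : ℕ} (C : Codebook U0 U1 U2 n0 n1 n2)
    (t : Fin n0 × Fin n1 × Fin n2) : U0 × U1 × U2 :=
  ((C t.1).1, (C t.1).2.1 t.2.1, (C t.1).2.2 t.2.2)

section RandomCodebook

variable (qS : FinPMF S) (qU : S → FinPMF (U0 × U1 × U2)) {n0 n1 n2 : ℕ}

noncomputable def blockWeight (b : U0 × (Fin n1 → U1) × (Fin n2 → U2)) : ℝ :=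
  mU0 qS qU b.1 * ((∏ l, cU1 qS qU b.1 (b.2.1 l)) * ∏ l, cU2 qS qU b.1 (b.2.2 l))

noncomputable def codebookWeight (C : Codebook U0 U1 U2 n0 n1 n2) : ℝ :=
  ∏ j, blockWeight qS qU (C j)

noncomputable def resampleU1 (keep : Prop) [Decidable keep] (Ψ : U0 × U1 × U2 → ℝ)
    (u : U0 × U1 × U2) : ℝ :=
  if keep then Ψ u else ∑ v, cU1 qS qU u.1 v * Ψ (u.1, v, u.2.2)

noncomputable def resampleU2 (keep : Prop) [Decidable keep] (Ψ : U0 × U1 × U2 → ℝ)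
    (u : U0 × U1 × U2) : ℝ :=
  if keep then Ψ u else ∑ v, cU2 qS qU u.1 v * Ψ (u.1, u.2.1, v)

/-- `E[Ψ(C_{t'}) | C_t = u]` for the random codebook (`sum_codebookWeight_mul`): the coordinates
that `t'` shares with `t` are kept, the others are resampled. -/
noncomputable def condExpect (t t' : Fin n0 × Fin n1 × Fin n2) (Ψ : U0 × U1 × U2 → ℝ)
    (u : U0 × U1 × U2) : ℝ :=
  if t'.1 = t.1 then
    resampleU1 qS qU (t'.2.1 = t.2.1) (resampleU2 qS qU (t'.2.2 = t.2.2) Ψ) u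
  else ∑ v, qIndep qS qU v * Ψ v

theorem blockWeight_nonneg (b : U0 × (Fin n1 → U1) × (Fin n2 → U2)) :
    0 ≤ blockWeight qS qU b :=
  mul_nonneg (mU0_nonneg qS qU _) (mul_nonneg
    (Finset.prod_nonneg fun _ _ => cU1_nonneg qS qU _ _)
    (Finset.prod_nonneg fun _ _ => cU2_nonneg qS qU _ _))

theorem sum_blockWeight : ∑ b : U0 × (Fin n1 → U1) × (Fin n2 → U2), blockWeight qS qU b = 1 := by
  simp only [Fintype.sum_prod_type, blockWeight, ← Finset.mul_sum, ← Finset.sum_mul]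
  rw [← sum_mU0 qS qU]
  refine Finset.sum_congr rfl fun u0 _ => ?_
  by_cases h0 : mU0 qS qU u0 = 0
  · rw [h0, zero_mul]
  rw [Fintype.sum_pi_prod_eq_one (sum_cU1 qS qU h0), Fintype.sum_pi_prod_eq_one (sum_cU2 qS qU h0),
    one_mul, mul_one]

theorem sum_blockWeight_mul (l1 l1' : Fin n1) (l2 l2' : Fin n2) (Φ Ψ : U0 × U1 × U2 → ℝ) :
    ∑ b : U0 × (Fin n1 → U1) × (Fin n2 → U2),
        blockWeight qS qU b * (Φ (b.1, b.2.1 l1, b.2.2 l2) * Ψ (b.1, b.2.1 l1', b.2.2 l2')) =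
      ∑ u, qIndep qS qU u * Φ u *
        resampleU1 qS qU (l1' = l1) (resampleU2 qS qU (l2' = l2) Ψ) u := by
  simp only [Fintype.sum_prod_type, blockWeight, qIndep]
  refine Finset.sum_congr rfl fun u0 _ => ?_
  by_cases h0 : mU0 qS qU u0 = 0
  · simp [h0]
  set c1 := cU1 qS qU u0
  set c2 := cU2 qS qU u0
  set Ψ2 := resampleU2 qS qU (l2' = l2) Ψ
  have sum_f2 : ∀ f1 : Fin n1 → U1, ∑ f2 : Fin n2 → U2,
      (∏ l, c2 (f2 l)) * (Φ (u0, f1 l1, f2 l2) * Ψ (u0, f1 l1', f2 l2')) =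
        ∑ u2, c2 u2 * Φ (u0, f1 l1, u2) * Ψ2 (u0, f1 l1', u2) := fun f1 =>
    Fintype.sum_pi_prod_mul_apply_mul_apply (sum_cU2 qS qU h0) l2 l2'
      (fun u2 => Φ (u0, f1 l1, u2)) (fun u2 => Ψ (u0, f1 l1', u2))
  have sum_f1 : ∀ u2 : U2, ∑ f1 : Fin n1 → U1,
      (∏ l, c1 (f1 l)) * (Φ (u0, f1 l1, u2) * Ψ2 (u0, f1 l1', u2)) =
        ∑ u1, c1 u1 * Φ (u0, u1, u2) * resampleU1 qS qU (l1' = l1) Ψ2 (u0, u1, u2) := fun u2 =>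
    Fintype.sum_pi_prod_mul_apply_mul_apply (sum_cU1 qS qU h0) l1 l1'
      (fun u1 => Φ (u0, u1, u2)) (fun u1 => Ψ2 (u0, u1, u2))
  calc _ = mU0 qS qU u0 * ∑ f1 : Fin n1 → U1, (∏ l, c1 (f1 l)) * ∑ f2 : Fin n2 → U2,
          (∏ l, c2 (f2 l)) * (Φ (u0, f1 l1, f2 l2) * Ψ (u0, f1 l1', f2 l2')) := by
        simp only [Finset.mul_sum]
        exact Finset.sum_congr rfl fun _ _ => Finset.sum_congr rfl fun _ _ => by ring
    _ = mU0 qS qU u0 * ∑ u2, c2 u2 * ∑ f1 : Fin n1 → U1,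
          (∏ l, c1 (f1 l)) * (Φ (u0, f1 l1, u2) * Ψ2 (u0, f1 l1', u2)) := by
        simp only [sum_f2, Finset.mul_sum]
        rw [Finset.sum_comm]
        exact Finset.sum_congr rfl fun _ _ => Finset.sum_congr rfl fun _ _ => by ring
    _ = _ := by
        simp only [sum_f1, Finset.mul_sum]
        rw [Finset.sum_comm]
        exact Finset.sum_congr rfl fun _ _ => Finset.sum_congr rfl fun _ _ => by ring

theorem sum_blockWeight_mul_apply (l1 : Fin n1) (l2 : Fin n2) (Φ : U0 × U1 × U2 → ℝ) :
    ∑ b : U0 × (Fin n1 → U1) × (Fin n2 → U2), blockWeight qS qU b * Φ (b.1, b.2.1 l1, b.2.2 l2) =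
      ∑ u, qIndep qS qU u * Φ u := by
  simpa [resampleU1, resampleU2] using sum_blockWeight_mul qS qU l1 l1 l2 l2 Φ 1

theorem codebookWeight_nonneg (C : Codebook U0 U1 U2 n0 n1 n2) : 0 ≤ codebookWeight qS qU C :=
  Finset.prod_nonneg fun _ _ => blockWeight_nonneg qS qU _

theorem sum_codebookWeight :
    ∑ C : Codebook U0 U1 U2 n0 n1 n2, codebookWeight qS qU C = 1 :=
  Fintype.sum_pi_prod_eq_one (sum_blockWeight qS qU)

theorem sum_codebookWeight_mul (t t' : Fin n0 × Fin n1 × Fin n2) (Φ Ψ : U0 × U1 × U2 → ℝ) :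
    ∑ C : Codebook U0 U1 U2 n0 n1 n2,
        codebookWeight qS qU C * (Φ (C.word t) * Ψ (C.word t')) =
      ∑ u, qIndep qS qU u * Φ u * condExpect qS qU t t' Ψ u := by
  have := Fintype.sum_pi_prod_mul_apply_mul_apply (sum_blockWeight qS qU) t.1 t'.1
    (fun b => Φ (b.1, b.2.1 t.2.1, b.2.2 t.2.2)) (fun b => Ψ (b.1, b.2.1 t'.2.1, b.2.2 t'.2.2))
  simp only [codebookWeight, Codebook.word, this, condExpect]
  by_cases hj : t'.1 = t.1
  · simp only [hj, if_true, mul_assoc, sum_blockWeight_mul]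
  · simp only [hj, if_false, ← Finset.sum_mul, sum_blockWeight_mul_apply]

theorem sum_codebookWeight_mul_apply (t : Fin n0 × Fin n1 × Fin n2) (Φ : U0 × U1 × U2 → ℝ) :
    ∑ C : Codebook U0 U1 U2 n0 n1 n2, codebookWeight qS qU C * Φ (C.word t) =
      ∑ u, qIndep qS qU u * Φ u := by
  simpa [condExpect, resampleU1, resampleU2] using sum_codebookWeight_mul qS qU t t Φ 1

end RandomCodebook

section Achievability

variable (qS : FinPMF S) (qU : S → FinPMF (U0 × U1 × U2))

/-- A bound on `E[∑_{t'} likRatio s (C_{t'}) | C_t = u]`; it is `n₀n₁n₂` times the denominator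
of the main theorem when `M₁ = n₀n₁` and `M₂ = n₀n₂`. -/
noncomputable def condWeightBound (n0 n1 n2 : ℕ) (s : S) (u : U0 × U1 × U2) : ℝ :=
  n0 * n1 * n2 + n1 * n2 * 2 ^ iSU0 qS qU s u.1 + n2 * 2 ^ iSU01 qS qU s u.1 u.2.1 +
    n1 * 2 ^ iSU02 qS qU s u.1 u.2.2 +
    2 ^ (iSU012 qS qU s u.1 u.2.1 u.2.2 + iU1U2cU0 qS qU u.1 u.2.1 u.2.2)

variable {n0 n1 n2 : ℕ}

theorem condWeightBound_pos (s : S) (u : U0 × U1 × U2) :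
    0 < condWeightBound qS qU n0 n1 n2 s u := by
  unfold condWeightBound
  positivity

theorem condExpect_likRatio_le {s : S} (hs : 0 < qS.p s) (t t' : Fin n0 × Fin n1 × Fin n2)
    (u : U0 × U1 × U2) :
    condExpect qS qU t t' (likRatio qS qU s) u ≤
      1 + if t'.1 = t.1 then 2 ^ iSU0 qS qU s u.1 +
        (if t'.2.1 = t.2.1 then 2 ^ iSU01 qS qU s u.1 u.2.1 else 0) +
        (if t'.2.2 = t.2.2 then 2 ^ iSU02 qS qU s u.1 u.2.2 else 0) +
        (if t'.2 = t.2 then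
          2 ^ (iSU012 qS qU s u.1 u.2.1 u.2.2 + iU1U2cU0 qS qU u.1 u.2.1 u.2.2) else 0)
      else 0 := by
  obtain ⟨u0, u1, u2⟩ := u
  have h0 := sum_cU1_mul_sum_cU2_mul_likRatio_le qU hs u0
  have h01 := sum_cU2_mul_likRatio_le qU hs u0 u1
  have h02 := sum_cU1_mul_likRatio_le qU hs u0 u2
  have h012 := likRatio_le qU hs u0 u1 u2
  have : 0 < (2 : ℝ) ^ iSU0 qS qU s u0 := by positivity
  have : 0 < (2 : ℝ) ^ iSU01 qS qU s u0 u1 := by positivity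
  have : 0 < (2 : ℝ) ^ iSU02 qS qU s u0 u2 := by positivity
  have : 0 < (2 : ℝ) ^ (iSU012 qS qU s u0 u1 u2 + iU1U2cU0 qS qU u0 u1 u2) := by positivity
  simp only [condExpect, resampleU1, resampleU2, Prod.ext_iff]
  split_ifs <;> first | linarith [sum_qIndep_mul_likRatio qU hs] | tauto

theorem sum_condExpect_likRatio_le {s : S} (hs : 0 < qS.p s) (t : Fin n0 × Fin n1 × Fin n2)
    (u : U0 × U1 × U2) :
    ∑ t', condExpect qS qU t t' (likRatio qS qU s) u ≤ condWeightBound qS qU n0 n1 n2 s u := by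
  refine (Finset.sum_le_sum fun t' _ => condExpect_likRatio_le qS qU hs t t' u).trans_eq ?_
  simp [condWeightBound, Fintype.sum_prod_type, Finset.sum_add_distrib, Prod.ext_iff, ite_and]
  rw [Finset.sum_comm]
  simp
  ring

noncomputable def codebookEncoder [Nonempty (Fin n0 × Fin n1 × Fin n2)]
    (C : Codebook U0 U1 U2 n0 n1 n2) (s : S) : FinPMF (Fin n0 × Fin n1 × Fin n2) :=
  .normalize (fun t => likRatio qS qU s (C.word t)) fun _ => likRatio_nonneg qS qU s _

theorem sum_qIndep_mul_condWeightBound_le {s : S} (hs : 0 < qS.p s) (Φ : U0 × U1 × U2 → ℝ)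
    (hΦ : ∀ u, 0 ≤ Φ u) (t : Fin n0 × Fin n1 × Fin n2) :
    ∑ u, qIndep qS qU u * Φ u * condWeightBound qS qU n0 n1 n2 s u ≤
      ∑ C : Codebook U0 U1 U2 n0 n1 n2, codebookWeight qS qU C *
        (Φ (C.word t) * (2 * condWeightBound qS qU n0 n1 n2 s (C.word t) -
          ∑ t', likRatio qS qU s (C.word t'))) := by
  set w := likRatio qS qU s
  set K := condWeightBound qS qU n0 n1 n2 s
  calc ∑ u, qIndep qS qU u * Φ u * K u
      = 2 * ∑ u, qIndep qS qU u * Φ u * K u - ∑ u, qIndep qS qU u * Φ u * K u := by ring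
    _ ≤ 2 * ∑ u, qIndep qS qU u * Φ u * K u -
          ∑ u, qIndep qS qU u * Φ u * ∑ t', condExpect qS qU t t' w u := by
        refine sub_le_sub_left (Finset.sum_le_sum fun u _ => ?_) _
        exact mul_le_mul_of_nonneg_left (sum_condExpect_likRatio_le qS qU hs t u)
          (mul_nonneg (qIndep_nonneg qS qU u) (hΦ u))
    _ = 2 * ∑ C : Codebook U0 U1 U2 n0 n1 n2,
            codebookWeight qS qU C * (Φ (C.word t) * K (C.word t)) -
          ∑ t', ∑ C : Codebook U0 U1 U2 n0 n1 n2,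
            codebookWeight qS qU C * (Φ (C.word t) * w (C.word t')) := by
        rw [sum_codebookWeight_mul_apply qS qU t fun u => Φ u * K u]
        simp only [sum_codebookWeight_mul, Finset.mul_sum, mul_assoc]
        rw [Finset.sum_comm (γ := Fin n0 × Fin n1 × Fin n2)]
    _ = _ := by
        simp only [mul_sub, Finset.mul_sum, Finset.sum_sub_distrib]
        rw [Finset.sum_comm (γ := Fin n0 × Fin n1 × Fin n2)]
        congr 1
        exact Finset.sum_congr rfl fun _ _ => by ring

theorem sum_div_condWeightBound_le [Nonempty (Fin n0 × Fin n1 × Fin n2)] {s : S}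
    (hs : 0 < qS.p s) (G : U0 × U1 × U2 → ℝ) (hG : ∀ u, 0 ≤ G u)
    (t : Fin n0 × Fin n1 × Fin n2) :
    ∑ u, (qU s).p u * G u / condWeightBound qS qU n0 n1 n2 s u ≤
      ∑ C : Codebook U0 U1 U2 n0 n1 n2,
        codebookWeight qS qU C * ((codebookEncoder qS qU C s).p t * G (C.word t)) := by
  set w := likRatio qS qU s
  set K := condWeightBound qS qU n0 n1 n2 s
  have hK : ∀ u, 0 < K u := condWeightBound_pos qS qU s
  calc ∑ u, (qU s).p u * G u / K u
      = ∑ u, qIndep qS qU u * (w u * G u / K u ^ 2) * K u := by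
        refine Finset.sum_congr rfl fun u _ => ?_
        rw [← qIndep_mul_likRatio qU hs u]
        simp only [w]
        field_simp [(hK u).ne']
    _ ≤ ∑ C : Codebook U0 U1 U2 n0 n1 n2, codebookWeight qS qU C *
          (w (C.word t) * G (C.word t) / K (C.word t) ^ 2 *
            (2 * K (C.word t) - ∑ t', w (C.word t'))) :=
        sum_qIndep_mul_condWeightBound_le qS qU hs _
          (fun u => div_nonneg (mul_nonneg (likRatio_nonneg qS qU s u) (hG u)) (sq_nonneg _)) t
    _ ≤ _ := by
        refine Finset.sum_le_sum fun C _ => mul_le_mul_of_nonneg_left ?_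
          (codebookWeight_nonneg qS qU C)
        calc _ = w (C.word t) * (2 * K (C.word t) - ∑ t', w (C.word t')) / K (C.word t) ^ 2 *
              G (C.word t) := by ring
          _ ≤ _ := mul_le_mul_of_nonneg_right (FinPMF.mul_two_mul_sub_div_sq_le_normalize
              (fun t => likRatio_nonneg qS qU s (C.word t)) (hK (C.word t)) t) (hG _)

theorem exists_codebook [Nonempty (Fin n0 × Fin n1 × Fin n2)] (G : S → U0 × U1 × U2 → ℝ)
    (hG : ∀ s u, 0 ≤ G s u) :
    ∃ C : Codebook U0 U1 U2 n0 n1 n2,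
      ∑ s, ∑ u, qS.p s * (qU s).p u * G s u * (n0 * n1 * n2) /
          condWeightBound qS qU n0 n1 n2 s u ≤
        ∑ s, ∑ t, qS.p s * (codebookEncoder qS qU C s).p t * G s (C.word t) := by
  refine exists_le_of_le_sum_mul (codebookWeight_nonneg qS qU) (sum_codebookWeight qS qU) ?_
  simp only [Finset.mul_sum]
  rw [Finset.sum_comm (γ := Codebook U0 U1 U2 n0 n1 n2)]
  refine Finset.sum_le_sum fun s _ => ?_
  rcases (qS.nonneg s).eq_or_lt with hs | hs
  · simp [← hs]
  calc _ = qS.p s * ∑ t : Fin n0 × Fin n1 × Fin n2,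
          ∑ u, (qU s).p u * G s u / condWeightBound qS qU n0 n1 n2 s u := by
        simp only [Finset.sum_const, Finset.card_univ, Fintype.card_prod, Fintype.card_fin,
          nsmul_eq_mul, Finset.mul_sum]
        push_cast
        exact Finset.sum_congr rfl fun _ _ => by ring
    _ ≤ qS.p s * ∑ t, ∑ C : Codebook U0 U1 U2 n0 n1 n2,
          codebookWeight qS qU C * ((codebookEncoder qS qU C s).p t * G s (C.word t)) := by
        gcongr with t
        exact sum_div_condWeightBound_le qS qU hs (G s) (hG s) t
    _ = _ := by
        simp only [Finset.mul_sum]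
        rw [Finset.sum_comm]
        exact Finset.sum_congr rfl fun _ _ => Finset.sum_congr rfl fun _ _ => by ring

end Achievability

theorem oneShot_multiple_description_general (qS : FinPMF S)
    (qU : S → FinPMF (U0 × U1 × U2))
    (d0 : S → R0 → ℝ) (d1 : S → R1 → ℝ) (d2 : S → R2 → ℝ)
    (D0 D1 D2 : ℝ)
    (g0 : U0 → U1 → U2 → R0) (g1 : U0 → U1 → R1) (g2 : U0 → U2 → R2)
    (M1 M2 J0 : ℕ) (hM1 : 0 < M1) (hM2 : 0 < M2)
    (hJ01 : J0 ∣ M1) (hJ02 : J0 ∣ M2) :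
    ∃ (enc : S → FinPMF (Fin M1 × Fin M2)) (dec0 : Fin M1 × Fin M2 → FinPMF R0)
      (dec1 : Fin M1 → FinPMF R1) (dec2 : Fin M2 → FinPMF R2),
      pNoExcessMD M1 M2 qS d0 d1 d2 D0 D1 D2 enc dec0 dec1 dec2 ≥
        ∑ s : S, ∑ u0 : U0, ∑ u1 : U1, ∑ u2 : U2,
          qMD qS qU s u0 u1 u2 *
          ind (d0 s (g0 u0 u1 u2) ≤ D0 ∧ d1 s (g1 u0 u1) ≤ D1 ∧ d2 s (g2 u0 u2) ≤ D2) *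
          (1 + (J0 : ℝ)⁻¹ * (2 : ℝ) ^ (iSU0 qS qU s u0)
             + (M1 : ℝ)⁻¹ * (2 : ℝ) ^ (iSU01 qS qU s u0 u1)
             + (M2 : ℝ)⁻¹ * (2 : ℝ) ^ (iSU02 qS qU s u0 u2)
             + (J0 : ℝ) * ((M1 : ℝ) * (M2 : ℝ))⁻¹ *
                 (2 : ℝ) ^ (iSU012 qS qU s u0 u1 u2 + iU1U2cU0 qS qU u0 u1 u2))⁻¹ := by
  classical
  obtain ⟨L1, rfl⟩ := hJ01
  obtain ⟨L2, rfl⟩ := hJ02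
  obtain ⟨hJ0, hL1⟩ := CanonicallyOrderedAdd.mul_pos.mp hM1
  have hL2 := (CanonicallyOrderedAdd.mul_pos.mp hM2).2
  have : Nonempty (Fin J0 × Fin L1 × Fin L2) := ⟨(⟨0, hJ0⟩, ⟨0, hL1⟩, ⟨0, hL2⟩)⟩
  obtain ⟨C, hC⟩ := exists_codebook qS qU (n0 := J0) (n1 := L1) (n2 := L2)
    (fun s u => ind (d0 s (g0 u.1 u.2.1 u.2.2) ≤ D0 ∧ d1 s (g1 u.1 u.2.1) ≤ D1 ∧
      d2 s (g2 u.1 u.2.2) ≤ D2)) fun _ _ => ind_nonneg _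
  let e1 : Fin J0 × Fin L1 ≃ Fin (J0 * L1) := finProdFinEquiv
  let e2 : Fin J0 × Fin L2 ≃ Fin (J0 * L2) := finProdFinEquiv
  refine ⟨fun s => (codebookEncoder qS qU C s).map fun t => (e1 (t.1, t.2.1), e2 (t.1, t.2.2)),
    fun m => .dirac (g0 (C (e1.symm m.1).1).1 ((C (e1.symm m.1).1).2.1 (e1.symm m.1).2)
      ((C (e2.symm m.2).1).2.2 (e2.symm m.2).2)),
    fun m1 => .dirac (g1 (C (e1.symm m1).1).1 ((C (e1.symm m1).1).2.1 (e1.symm m1).2)),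
    fun m2 => .dirac (g2 (C (e2.symm m2).1).1 ((C (e2.symm m2).1).2.2 (e2.symm m2).2)), ?_⟩
  rw [pNoExcessMD_map_dirac]
  simp only [Equiv.symm_apply_apply]
  refine le_of_eq_of_le ?_ hC
  simp only [Fintype.sum_prod_type]
  refine Finset.sum_congr rfl fun s _ => Finset.sum_congr rfl fun u0 _ =>
    Finset.sum_congr rfl fun u1 _ => Finset.sum_congr rfl fun u2 _ => ?_
  simp only [qMD, condWeightBound]
  push_cast
  field_simp

/-- One-shot multiple description achievability (Zhang–Berger form), where `J₀` is a
common divisor of `M₁` and `M₂`. -/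
theorem oneShot_multiple_description (qS : FinPMF S)
    (qU : S → FinPMF (U0 × U1 × U2))
    (d0 : S → R0 → ℝ) (d1 : S → R1 → ℝ) (d2 : S → R2 → ℝ)
    (hd0 : ∀ s r, 0 ≤ d0 s r) (hd1 : ∀ s r, 0 ≤ d1 s r) (hd2 : ∀ s r, 0 ≤ d2 s r)
    (D0 D1 D2 : ℝ) (hD0 : 0 ≤ D0) (hD1 : 0 ≤ D1) (hD2 : 0 ≤ D2)
    (g0 : U0 → U1 → U2 → R0) (g1 : U0 → U1 → R1) (g2 : U0 → U2 → R2)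
    (M1 M2 J0 : ℕ) (hM1 : 0 < M1) (hM2 : 0 < M2) (hJ0 : 0 < J0)
    (hJ01 : J0 ∣ M1) (hJ02 : J0 ∣ M2) :
    ∃ (enc : S → FinPMF (Fin M1 × Fin M2)) (dec0 : Fin M1 × Fin M2 → FinPMF R0)
      (dec1 : Fin M1 → FinPMF R1) (dec2 : Fin M2 → FinPMF R2),
      pNoExcessMD M1 M2 qS d0 d1 d2 D0 D1 D2 enc dec0 dec1 dec2 ≥
        ∑ s : S, ∑ u0 : U0, ∑ u1 : U1, ∑ u2 : U2,
          qMD qS qU s u0 u1 u2 *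
          ind (d0 s (g0 u0 u1 u2) ≤ D0 ∧ d1 s (g1 u0 u1) ≤ D1 ∧ d2 s (g2 u0 u2) ≤ D2) *
          (1 + (J0 : ℝ)⁻¹ * (2 : ℝ) ^ (iSU0 qS qU s u0)
             + (M1 : ℝ)⁻¹ * (2 : ℝ) ^ (iSU01 qS qU s u0 u1)
             + (M2 : ℝ)⁻¹ * (2 : ℝ) ^ (iSU02 qS qU s u0 u2)
             + (J0 : ℝ) * ((M1 : ℝ) * (M2 : ℝ))⁻¹ *
                 (2 : ℝ) ^ (iSU012 qS qU s u0 u1 u2 + iU1U2cU0 qS qU u0 u1 u2))⁻¹ :=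
  oneShot_multiple_description_general qS qU d0 d1 d2 D0 D1 D2 g0 g1 g2 M1 M2 J0 hM1 hM2 hJ01 hJ02
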